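/- arXiv:1012.1451 — 2 statements merged into one kernel-verified Lean document; each statement's English description precedes it below -/
import Mathlib

section
/- Let L be a finite graded lattice of rank n with H̃_{n-2}(Δ(L̄); k) ≠ 0, and let J be the order ideal of L \ {1̂} generated by the set of good coatoms of L. Then M = J ∪ {1̂} is a graded lattice of rank n, all coatoms of M are good, and H̃_{n-2}(Δ(M̄); k) ≠ 0. -/
set_option maxSynthPendingDepth 2

open Finset

variable {α : Type*}

/-- A `j`-vertex simplex of the order complex of `s ⊆ α`: a strictly increasing
`j`-tuple of elements of `s` (for `j = 0` this is the unique empty simplex). -/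
def OrderedSimplex [Preorder α] (s : Set α) (j : ℕ) : Type _ :=
  {f : Fin j → α // StrictMono f ∧ ∀ i, f i ∈ s}

/-- The module of simplicial chains with `j` vertices (i.e. of degree `j - 1`)
of the order complex of `s`, with coefficients in `K`.  Since degree `j = 0`
corresponds to the empty simplex, this is the *augmented* chain complex. -/
abbrev SimpChains (K : Type*) [CommRing K] [Preorder α] (s : Set α) (j : ℕ) :=
  OrderedSimplex s j →₀ K

/-- The `i`-th face of a simplex (delete the `i`-th vertex). -/
def OrderedSimplex.face [Preorder α] {s : Set α} {j : ℕ}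
    (σ : OrderedSimplex s (j + 1)) (i : Fin (j + 1)) : OrderedSimplex s j :=
  ⟨σ.1 ∘ Fin.succAbove i, σ.2.1.comp (Fin.strictMono_succAbove i), fun _ => σ.2.2 _⟩

/-- The simplicial boundary map (for `j = 0` it is the augmentation). -/
noncomputable def simpBoundary (K : Type*) [CommRing K] [Preorder α] (s : Set α) (j : ℕ) :
    SimpChains K s (j + 1) →ₗ[K] SimpChains K s j :=
  Finsupp.lsum K fun σ => ∑ i : Fin (j + 1), ((-1 : K) ^ (i : ℕ)) • Finsupp.lsingle (σ.face i)

/-- Cycles with `j` vertices (for `j = 0` every chain is a cycle). -/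
noncomputable def simpCycles (K : Type*) [CommRing K] [Preorder α] (s : Set α) :
    (j : ℕ) → Submodule K (SimpChains K s j)
  | 0 => ⊤
  | (i + 1) => LinearMap.ker (simpBoundary K s i)

/-- Boundaries with `j` vertices. -/
noncomputable def simpBoundaries (K : Type*) [CommRing K] [Preorder α] (s : Set α) (j : ℕ) :
    Submodule K (SimpChains K s j) :=
  LinearMap.range (simpBoundary K s j)

/-- `ReducedHomology K s j` is the reduced simplicial homology group
`H̃_{j-1}(Δ(s); K)` of the order complex of `s` (the index `j` counts vertices,
so `j = 0` gives `H̃₋₁` and `j = n - 1` gives `H̃_{n-2}`). -/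
noncomputable def ReducedHomology (K : Type*) [CommRing K] [Preorder α] (s : Set α) (j : ℕ) :=
  ↥(simpCycles K s j) ⧸ (simpBoundaries K s j).comap (simpCycles K s j).subtype

noncomputable instance (K : Type*) [CommRing K] [Preorder α] (s : Set α) (j : ℕ) :
    AddCommGroup (ReducedHomology K s j) := by unfold ReducedHomology; infer_instance

noncomputable instance (K : Type*) [CommRing K] [Preorder α] (s : Set α) (j : ℕ) :
    Module K (ReducedHomology K s j) := by unfold ReducedHomology; infer_instance

/-- The proper part `L ∖ {⊥, ⊤}` of a bounded poset. -/
def properPart (α : Type*) [Preorder α] [BoundedOrder α] : Set α :=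
  {x | x ≠ ⊥ ∧ x ≠ ⊤}

/-- The flag `f`-vector entry `f_P(S)`: the number of chains in the proper part
of `P` whose set of ranks is exactly `S`. -/
noncomputable def flagf (α : Type*) [Preorder α] [BoundedOrder α] [GradeMinOrder ℕ α]
    (S : Finset ℕ) : ℕ :=
  Nat.card {C : Finset α // IsChain (· ≤ ·) (C : Set α) ∧ (↑C ⊆ properPart α) ∧
    C.image (grade ℕ) = S}

/-- The multinomial coefficient `α_n(S) = n! / (s₁!·(s₂-s₁)!⋯(n-s_l)!)`
for `S = {s₁ < s₂ < ⋯ < s_l} ⊆ [n-1]`; it equals `f_{B_n}(S)`. -/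
def alphaMulti (n : ℕ) (S : Finset ℕ) : ℕ :=
  n.factorial /
    ((S.sort (· ≤ ·) ++ [n]).zipWith (fun b a => (b - a).factorial)
      (0 :: S.sort (· ≤ ·))).prod

/-- An element `x` of a graded bounded poset is *good* if `x = ⊥` or the order
complex of the open interval `(⊥, x)` has nontrivial top reduced homology
`H̃_{ρ(x)-2}` over `K`. -/
def IsGoodElement (K : Type*) [CommRing K] [Preorder α] [OrderBot α] [GradeMinOrder ℕ α]
    (x : α) : Prop :=
  x = ⊥ ∨ Nontrivial (ReducedHomology K (Set.Ioo (⊥ : α) x) (grade ℕ x - 1))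

/-!
Take a nonzero top-dimensional cycle `z` of `Δ(L̄)`; in that degree there are no boundaries.
Every maximal chain in the support of `z` ends in a coatom `c`, and the coefficients of the
chains through `c`, with `c` removed, form a nonzero top-dimensional cycle of `Δ(0̂, c)`,
so `c` is good. Hence `z` lives on `M̄`, where it is again a nonzero cycle in top degree.
`M` is a graded lattice because `J` is a lower set generated by coatoms: meets stay in
`J ∪ {1̂}`, a join leaving `J` is `1̂`, and every cover relation of `M` is one of `L`, so the
maximal chains of `M` are maximal chains of `L`.
-/

section ReducedHomology

variable {K : Type*} [CommRing K] [Preorder α]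

theorem nontrivial_reducedHomology_iff {s : Set α} {j : ℕ} :
    Nontrivial (ReducedHomology K s j) ↔ ¬ simpCycles K s j ≤ simpBoundaries K s j := by
  rw [← not_subsingleton_iff_nontrivial, ReducedHomology, Submodule.Quotient.subsingleton_iff,
    Submodule.comap_subtype_eq_top]

theorem exists_mem_simpCycles_ne_zero {s : Set α} {j : ℕ}
    (h : Nontrivial (ReducedHomology K s j)) : ∃ z ∈ simpCycles K s j, z ≠ 0 := by
  obtain ⟨z, hz, hzb⟩ := SetLike.not_le_iff_exists.1 (nontrivial_reducedHomology_iff.1 h)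
  exact ⟨z, hz, fun h0 => hzb (h0 ▸ zero_mem _)⟩

theorem simpBoundaries_eq_bot {s : Set α} {j : ℕ} [IsEmpty (OrderedSimplex s (j + 1))] :
    simpBoundaries K s j = ⊥ := by
  rw [simpBoundaries, LinearMap.range_eq_bot, Subsingleton.elim (simpBoundary K s j) 0]

theorem nontrivial_reducedHomology_of_mem_simpCycles {s : Set α} {j : ℕ}
    [IsEmpty (OrderedSimplex s (j + 1))] {z : SimpChains K s j} (hz : z ∈ simpCycles K s j)
    (hz0 : z ≠ 0) : Nontrivial (ReducedHomology K s j) := by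
  rw [nontrivial_reducedHomology_iff, simpBoundaries_eq_bot]
  exact fun h => hz0 (by simpa using h hz)

theorem nontrivial_reducedHomology_empty [Nontrivial K] :
    Nontrivial (ReducedHomology K (∅ : Set α) 0) := by
  have : IsEmpty (OrderedSimplex (∅ : Set α) 1) := ⟨fun σ => σ.2.2 0⟩
  let σ₀ : OrderedSimplex (∅ : Set α) 0 := ⟨Fin.elim0, fun a => a.elim0, fun i => i.elim0⟩
  exact nontrivial_reducedHomology_of_mem_simpCycles (z := Finsupp.single σ₀ 1)
    Submodule.mem_top (Finsupp.single_ne_zero.2 one_ne_zero)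

open Classical in
theorem simpBoundary_apply {s : Set α} {j : ℕ} (l : SimpChains K s (j + 1))
    (τ : OrderedSimplex s j) :
    simpBoundary K s j l τ = ∑ p ∈ l.support ×ˢ univ,
      if p.1.face p.2 = τ then (-1 : K) ^ (p.2 : ℕ) * l p.1 else 0 := by
  rw [simpBoundary, Finsupp.lsum_apply, Finsupp.sum_apply, Finsupp.sum, sum_product]
  refine sum_congr rfl fun σ _ => ?_
  rw [LinearMap.sum_apply, Finsupp.finsetSum_apply]
  refine sum_congr rfl fun i _ => ?_
  rw [LinearMap.smul_apply, Finsupp.lsingle_apply, Finsupp.smul_apply, Finsupp.single_apply,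
    smul_eq_mul, mul_ite, mul_zero]

theorem simpBoundary_comapDomain {s t : Set α} {j m : ℕ}
    {F : OrderedSimplex t (j + 1) → OrderedSimplex s (m + 1)} (hF : F.Injective)
    {G : OrderedSimplex t j → OrderedSimplex s m} (hG : G.Injective)
    {e : Fin (j + 1) → Fin (m + 1)} (he : ∀ i, (e i : ℕ) = i)
    (hface : ∀ u i, (F u).face (e i) = G (u.face i))
    {z : SimpChains K s (m + 1)}
    (hlift : ∀ σ ∈ z.support, ∀ i' τ, σ.face i' = G τ → ∃ u i, F u = σ ∧ e i = i')
    (τ : OrderedSimplex t j) :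
    simpBoundary K t j (z.comapDomain F hF.injOn) τ = simpBoundary K s m z (G τ) := by
  classical
  rw [simpBoundary_apply, simpBoundary_apply]
  refine sum_bij_ne_zero (fun p _ _ => (F p.1, e p.2)) ?_ ?_ ?_ ?_
  · rintro ⟨u, i⟩ hp -
    simpa using hp
  · rintro ⟨u, i⟩ - - ⟨u', i'⟩ - - h
    simp only [Prod.mk.injEq] at h
    exact Prod.ext (hF h.1) (Fin.ext (by simpa only [he] using congrArg Fin.val h.2))
  · rintro ⟨σ, i'⟩ hp hne
    simp only [mem_product, Finsupp.mem_support_iff, mem_univ, and_true] at hp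
    obtain ⟨u, i, rfl, rfl⟩ := hlift σ (by simpa using hp) i' τ (by by_contra h; simp [h] at hne)
    refine ⟨(u, i), by simpa using hp, ?_, rfl⟩
    simpa [hface, hG.eq_iff, he] using hne
  · rintro ⟨u, i⟩ - -
    simp only [Finsupp.comapDomain_apply, hface, hG.eq_iff, he]

theorem comapDomain_mem_simpCycles {s t : Set α} {j m : ℕ}
    {F : OrderedSimplex t (j + 1) → OrderedSimplex s (m + 1)} (hF : F.Injective)
    {G : OrderedSimplex t j → OrderedSimplex s m} (hG : G.Injective)
    {e : Fin (j + 1) → Fin (m + 1)} (he : ∀ i, (e i : ℕ) = i)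
    (hface : ∀ u i, (F u).face (e i) = G (u.face i))
    {z : SimpChains K s (m + 1)} (hz : z ∈ simpCycles K s (m + 1))
    (hlift : ∀ σ ∈ z.support, ∀ i' τ, σ.face i' = G τ → ∃ u i, F u = σ ∧ e i = i') :
    z.comapDomain F hF.injOn ∈ simpCycles K t (j + 1) := by
  change simpBoundary K s m z = 0 at hz
  change simpBoundary K t j _ = 0
  ext τ
  rw [simpBoundary_comapDomain hF hG he hface hlift, hz]
  rfl

end ReducedHomology

namespace OrderedSimplex

variable [Preorder α] {s t : Set α} {j : ℕ}

def inclusion (h : t ⊆ s) (u : OrderedSimplex t j) : OrderedSimplex s j :=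
  ⟨u.1, u.2.1, fun i => h (u.2.2 i)⟩

theorem inclusion_injective (h : t ⊆ s) : (inclusion h : OrderedSimplex t j → _).Injective :=
  fun _ _ huv => Subtype.ext (congrArg Subtype.val huv :)

theorem inclusion_face (h : t ⊆ s) (u : OrderedSimplex t (j + 1)) (i : Fin (j + 1)) :
    (u.inclusion h).face i = (u.face i).inclusion h :=
  rfl

end OrderedSimplex

section Restriction

variable {K : Type*} [CommRing K] [Preorder α]

theorem nontrivial_reducedHomology_of_support_subset {s t : Set α} (hts : t ⊆ s) {j : ℕ}
    [IsEmpty (OrderedSimplex t (j + 1))] {z : SimpChains K s j} (hz : z ∈ simpCycles K s j)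
    (hz0 : z ≠ 0) (hsupp : ∀ σ ∈ z.support, ∀ i, σ.1 i ∈ t) :
    Nontrivial (ReducedHomology K t j) := by
  have hlift : ∀ σ ∈ z.support, ∃ u, OrderedSimplex.inclusion hts u = σ :=
    fun σ hσ => ⟨⟨σ.1, σ.2.1, hsupp σ hσ⟩, rfl⟩
  obtain ⟨σ₀, hσ₀⟩ := Finsupp.support_nonempty_iff.2 hz0
  obtain ⟨u₀, rfl⟩ := hlift σ₀ hσ₀
  refine nontrivial_reducedHomology_of_mem_simpCycles (z := z.comapDomain _
    (OrderedSimplex.inclusion_injective hts).injOn) ?_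
    (fun h => Finsupp.mem_support_iff.1 hσ₀ (DFunLike.congr_fun h u₀))
  cases j with
  | zero => exact Submodule.mem_top
  | succ m =>
    refine comapDomain_mem_simpCycles (OrderedSimplex.inclusion_injective hts)
      (OrderedSimplex.inclusion_injective hts) (e := id) (fun _ => rfl)
      (OrderedSimplex.inclusion_face hts) hz ?_
    intro σ hσ i' _ _
    obtain ⟨u, rfl⟩ := hlift σ hσ
    exact ⟨u, i', rfl, rfl⟩

end Restriction

namespace Fin

theorem strictMono_snoc [Preorder α] {j : ℕ} {f : Fin j → α} (hf : StrictMono f) {c : α}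
    (hc : ∀ i, f i < c) : StrictMono (Fin.snoc f c : Fin (j + 1) → α) := by
  intro a b hab
  induction b using Fin.lastCases with
  | last =>
    obtain ⟨a, rfl⟩ := Fin.exists_castSucc_eq.2 hab.ne
    simpa using hc a
  | cast b =>
    obtain ⟨a, rfl⟩ := Fin.exists_castSucc_eq.2 (hab.trans (Fin.castSucc_lt_last b)).ne
    simpa using hf (Fin.castSucc_lt_castSucc_iff.1 hab)

theorem snoc_comp_succAbove_castSucc {j : ℕ} (f : Fin (j + 1) → α) (c : α) (i : Fin (j + 1)) :
    (Fin.snoc f c : Fin (j + 2) → α) ∘ i.castSucc.succAbove = Fin.snoc (f ∘ i.succAbove) c := by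
  funext k
  induction k using Fin.lastCases with
  | last => simp [Fin.succAbove_castSucc_of_le _ _ (Fin.le_last i)]
  | cast k => simp [Fin.castSucc_succAbove_castSucc]

end Fin

namespace OrderedSimplex

variable [Preorder α] {s : Set α} {c : α} {j : ℕ}

theorem face_apply (σ : OrderedSimplex s (j + 1)) (i : Fin (j + 1)) (k : Fin j) :
    (σ.face i).1 k = σ.1 (i.succAbove k) :=
  rfl

def snoc (hc : c ∈ s) (u : OrderedSimplex (s ∩ Set.Iio c) j) : OrderedSimplex s (j + 1) :=
  ⟨Fin.snoc u.1 c, Fin.strictMono_snoc u.2.1 fun i => (u.2.2 i).2, fun i => by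
    induction i using Fin.lastCases with
    | last => simpa using hc
    | cast i => simpa using (u.2.2 i).1⟩

theorem snoc_injective (hc : c ∈ s) :
    (snoc hc : OrderedSimplex (s ∩ Set.Iio c) j → _).Injective :=
  fun _ _ h => Subtype.ext (Fin.snoc_left_injective (α := fun _ => α) c (congrArg Subtype.val h))

theorem snoc_face_castSucc (hc : c ∈ s) (u : OrderedSimplex (s ∩ Set.Iio c) (j + 1))
    (i : Fin (j + 1)) : (u.snoc hc).face i.castSucc = (u.face i).snoc hc :=
  Subtype.ext (Fin.snoc_comp_succAbove_castSucc u.1 c i)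

theorem exists_snoc_eq (hc : c ∈ s) (σ : OrderedSimplex s (j + 1))
    (hσ : σ.1 (Fin.last j) = c) : ∃ u, snoc hc u = σ := by
  refine ⟨⟨σ.1 ∘ Fin.castSucc, σ.2.1.comp Fin.strictMono_castSucc, fun k =>
    ⟨σ.2.2 _, hσ ▸ σ.2.1 (Fin.castSucc_lt_last k)⟩⟩, Subtype.ext ?_⟩
  change Fin.snoc (σ.1 ∘ Fin.castSucc) c = σ.1
  rw [← hσ]
  exact Fin.snoc_init_self σ.1

end OrderedSimplex

section Link

variable {K : Type*} [CommRing K] [Preorder α]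

open OrderedSimplex in
/-- The class is represented by the link `u ↦ z (u.snoc _)` of `z` at the top vertex of `σ`. -/
theorem nontrivial_reducedHomology_inter_Iio {s : Set α} {j : ℕ} {z : SimpChains K s (j + 1)}
    (hz : z ∈ simpCycles K s (j + 1)) {σ : OrderedSimplex s (j + 1)} (hσ : σ ∈ z.support)
    (hmax : Maximal (· ∈ s) (σ.1 (Fin.last j)))
    [IsEmpty (OrderedSimplex (s ∩ Set.Iio (σ.1 (Fin.last j))) (j + 1))] :
    Nontrivial (ReducedHomology K (s ∩ Set.Iio (σ.1 (Fin.last j))) j) := by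
  obtain ⟨u₀, hu₀⟩ := exists_snoc_eq hmax.prop σ rfl
  refine nontrivial_reducedHomology_of_mem_simpCycles
    (z := z.comapDomain _ (snoc_injective hmax.prop).injOn) ?_
    (fun h => Finsupp.mem_support_iff.1 hσ (hu₀ ▸ DFunLike.congr_fun h u₀))
  cases j with
  | zero => exact Submodule.mem_top
  | succ q =>
    refine comapDomain_mem_simpCycles (snoc_injective hmax.prop) (snoc_injective hmax.prop)
      (e := Fin.castSucc) (fun _ => rfl) (snoc_face_castSucc hmax.prop) hz ?_
    intro σ' _ i' τ h
    have hlast := congrArg (fun ρ : OrderedSimplex s (q + 1) => ρ.1 (Fin.last q)) h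
    simp only [face_apply, snoc, Fin.snoc_last] at hlast
    induction i' using Fin.lastCases with
    | last =>
      rw [Fin.succAbove_last] at hlast
      exact absurd (hlast ▸ σ'.2.1 (Fin.castSucc_lt_last _)) (hmax.not_gt (σ'.2.2 _))
    | cast i =>
      rw [Fin.succAbove_castSucc_of_le _ _ (Fin.le_last i), Fin.succ_last] at hlast
      obtain ⟨u, rfl⟩ := exists_snoc_eq hmax.prop σ' hlast
      exact ⟨u, i, rfl, rfl⟩

end Link

section Graded

variable [PartialOrder α] [GradeOrder ℕ α]

theorem grade_add_le_grade_last {j : ℕ} {f : Fin (j + 1) → α} (hf : StrictMono f) :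
    grade ℕ (f 0) + j ≤ grade ℕ (f (Fin.last j)) := by
  induction j with
  | zero => rfl
  | succ j ih =>
    have hinit := ih (hf.comp Fin.strictMono_castSucc)
    have hstep := grade_strictMono (𝕆 := ℕ) (hf (Fin.castSucc_lt_last (Fin.last j)))
    simp only [Function.comp_apply, Fin.castSucc_zero] at hinit
    omega

theorem isEmpty_orderedSimplex_of_subset_Ioo {s : Set α} {a b : α} (hs : s ⊆ Set.Ioo a b)
    {j : ℕ} (h : grade ℕ b ≤ grade ℕ a + j + 1) : IsEmpty (OrderedSimplex s (j + 1)) := by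
  refine ⟨fun σ => ?_⟩
  have hspan := grade_add_le_grade_last σ.2.1
  have hlo := grade_strictMono (𝕆 := ℕ) (hs (σ.2.2 0)).1
  have hhi := grade_strictMono (𝕆 := ℕ) (hs (σ.2.2 (Fin.last j))).2
  omega

theorem eq_of_le_of_grade_eq {a b : α} (hab : a ≤ b) (h : grade ℕ a = grade ℕ b) : a = b :=
  hab.eq_of_not_lt fun hlt => (grade_strictMono hlt).ne h

theorem IsChain.le_of_grade_le {C : Set α} (hC : IsChain (· ≤ ·) C) {x y : α} (hx : x ∈ C)
    (hy : y ∈ C) (h : grade ℕ x ≤ grade ℕ y) : x ≤ y :=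
  (hC.total hx hy).elim id fun hyx =>
    hyx.lt_or_eq.elim (fun hlt => absurd (grade_strictMono hlt) h.not_gt) Eq.ge

theorem covBy_top_of_grade_eq [OrderTop α] {n : ℕ} (hrank : grade ℕ (⊤ : α) = n) (hn : 1 ≤ n)
    {c : α} (hc : grade ℕ c = n - 1) : c ⋖ ⊤ := by
  refine (covBy_iff_lt_covBy_grade (𝕆 := ℕ)).2 ⟨lt_top_iff_ne_top.2 fun h => ?_, ?_⟩
  · rw [h, hrank] at hc
    omega
  · rw [hc, hrank, Nat.covBy_iff_add_one_eq]
    omega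

end Graded

section ProperPart

variable [PartialOrder α] [BoundedOrder α]

theorem properPart_eq_Ioo : properPart α = Set.Ioo ⊥ ⊤ := by
  ext x
  simp [properPart, bot_lt_iff_ne_bot, lt_top_iff_ne_top]

theorem grade_last_of_properPart [GradeMinOrder ℕ α] {p : ℕ} (hrank : grade ℕ (⊤ : α) = p + 2)
    (σ : OrderedSimplex (properPart α) (p + 1)) : grade ℕ (σ.1 (Fin.last p)) = p + 1 := by
  have hspan := grade_add_le_grade_last σ.2.1
  have hlo := grade_strictMono (𝕆 := ℕ) (bot_lt_iff_ne_bot.2 (σ.2.2 0).1)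
  have hhi := grade_strictMono (𝕆 := ℕ) (lt_top_iff_ne_top.2 (σ.2.2 (Fin.last p)).2)
  rw [grade_bot, Nat.bot_eq_zero] at hlo
  omega

end ProperPart

section GoodCoatoms

variable {K : Type*} [CommRing K] [PartialOrder α] [BoundedOrder α] [GradeMinOrder ℕ α]

theorem nontrivial_reducedHomology_Ioo_last {p : ℕ} (hrank : grade ℕ (⊤ : α) = p + 2)
    {z : SimpChains K (properPart α) (p + 1)} (hz : z ∈ simpCycles K (properPart α) (p + 1))
    {σ : OrderedSimplex (properPart α) (p + 1)} (hσ : σ ∈ z.support) :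
    Nontrivial (ReducedHomology K (Set.Ioo ⊥ (σ.1 (Fin.last p))) p) := by
  set c := σ.1 (Fin.last p)
  have hc : grade ℕ c = p + 1 := grade_last_of_properPart hrank σ
  have hlink : properPart α ∩ Set.Iio c = Set.Ioo ⊥ c := by
    ext x
    simp only [properPart_eq_Ioo, Set.mem_inter_iff, Set.mem_Ioo, Set.mem_Iio]
    exact ⟨fun h => ⟨h.1.1, h.2⟩, fun h => ⟨⟨h.1, h.2.trans_le le_top⟩, h.2⟩⟩
  have hmax : Maximal (· ∈ properPart α) c := by
    refine ⟨σ.2.2 _, fun x hx hcx => (hcx.eq_of_not_lt fun hlt => ?_).ge⟩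
    have hup := grade_strictMono (𝕆 := ℕ) hlt
    have htop := grade_strictMono (𝕆 := ℕ) (lt_top_iff_ne_top.2 hx.2)
    omega
  have : IsEmpty (OrderedSimplex (properPart α ∩ Set.Iio c) (p + 1)) := by
    rw [hlink]
    exact isEmpty_orderedSimplex_of_subset_Ioo subset_rfl (by simp [hc])
  rw [← hlink]
  exact nontrivial_reducedHomology_inter_Iio hz hσ hmax

theorem exists_good_coatom_ge {n : ℕ} (hrank : grade ℕ (⊤ : α) = n)
    {z : SimpChains K (properPart α) (n - 1)} (hz : z ∈ simpCycles K (properPart α) (n - 1))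
    {σ : OrderedSimplex (properPart α) (n - 1)} (hσ : σ ∈ z.support) (i : Fin (n - 1)) :
    ∃ c, grade ℕ c = n - 1 ∧ Nontrivial (ReducedHomology K (Set.Ioo (⊥ : α) c) (n - 2)) ∧
      σ.1 i ≤ c := by
  obtain ⟨p, rfl⟩ : ∃ p, n = p + 2 := ⟨n - 2, by have := i.2; omega⟩
  exact ⟨_, grade_last_of_properPart hrank σ, nontrivial_reducedHomology_Ioo_last hrank hz hσ,
    σ.2.1.monotone (Fin.le_last i)⟩

theorem exists_good_coatom [Nontrivial K] {n : ℕ} (hrank : grade ℕ (⊤ : α) = n) (hn : 1 ≤ n)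
    (hH : Nontrivial (ReducedHomology K (properPart α) (n - 1))) :
    ∃ c, grade ℕ c = n - 1 ∧ Nontrivial (ReducedHomology K (Set.Ioo (⊥ : α) c) (n - 2)) := by
  obtain rfl | hn2 := hn.eq_or_lt
  · refine ⟨⊥, by simp, ?_⟩
    rw [Set.Ioo_self]
    exact nontrivial_reducedHomology_empty
  · obtain ⟨z, hz, hz0⟩ := exists_mem_simpCycles_ne_zero hH
    obtain ⟨σ, hσ⟩ := Finsupp.support_nonempty_iff.2 hz0
    obtain ⟨c, hc, hgood, -⟩ := exists_good_coatom_ge hrank hz hσ ⟨0, by omega⟩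
    exact ⟨c, hc, hgood⟩

end GoodCoatoms

section IdealWithTop

variable {J : Set α}

theorem exists_isGreatest_of_isLowerSet [Lattice α] [OrderTop α] (hJ : IsLowerSet J) {x y : α}
    (hx : x ∈ J ∪ {⊤}) (hy : y ∈ J ∪ {⊤}) :
    ∃ z, IsGreatest {w ∈ J ∪ {⊤} | w ≤ x ∧ w ≤ y} z := by
  refine ⟨x ⊓ y, ⟨?_, inf_le_left, inf_le_right⟩, fun w hw => le_inf hw.2.1 hw.2.2⟩
  rcases hx with hx | rfl
  · exact Or.inl (hJ inf_le_left hx)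
  · rwa [top_inf_eq]

theorem exists_isLeast_of_isLowerSet [Lattice α] [OrderTop α] (hJ : IsLowerSet J) (x y : α) :
    ∃ z, IsLeast {w ∈ J ∪ {⊤} | x ≤ w ∧ y ≤ w} z := by
  by_cases hxy : x ⊔ y ∈ J
  · exact ⟨x ⊔ y, ⟨Or.inl hxy, le_sup_left, le_sup_right⟩, fun w hw => sup_le hw.2.1 hw.2.2⟩
  · refine ⟨⊤, ⟨Or.inr rfl, le_top, le_top⟩, fun w ⟨hw, hxw, hyw⟩ => ?_⟩
    rcases hw with hw | rfl
    · exact absurd (hJ (sup_le hxw hyw) hw) hxy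
    · exact le_rfl

theorem exists_mem_Ioo_of_not_covBy [PartialOrder α] [OrderTop α] (hJ : IsLowerSet J)
    (hcoatom : ∀ a ∈ J, ∃ c ∈ J, c ⋖ ⊤ ∧ a ≤ c) {a b : α} (ha : a ∈ J ∪ {⊤})
    (hb : b ∈ J ∪ {⊤}) (hab : a < b) (hcov : ¬ a ⋖ b) : ∃ m ∈ J ∪ {⊤}, a < m ∧ m < b := by
  rcases hb with hb | rfl
  · obtain ⟨m, ham, hmb⟩ := (not_covBy_iff hab).1 hcov
    exact ⟨m, Or.inl (hJ hmb.le hb), ham, hmb⟩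
  · rcases ha with ha | rfl
    · obtain ⟨c, hc, hctop, hac⟩ := hcoatom a ha
      refine ⟨c, Or.inl hc, hac.lt_of_ne ?_, hctop.lt⟩
      rintro rfl
      exact hcov hctop
    · exact absurd hab (lt_irrefl _)

end IdealWithTop

section MaximalChain

variable [PartialOrder α]

def IsMaximalChainIn (M : Set α) (C : Finset α) : Prop :=
  ↑C ⊆ M ∧ IsChain (· ≤ ·) (C : Set α) ∧
    ∀ C' : Finset α, ↑C' ⊆ M → IsChain (· ≤ ·) (C' : Set α) → C ⊆ C' → C' = C

namespace IsMaximalChainIn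

variable {M : Set α} {C : Finset α}

theorem mem_of_forall_le_or_ge (hC : IsMaximalChainIn M C) {x : α} (hx : x ∈ M)
    (hxC : ∀ y ∈ C, x ≤ y ∨ y ≤ x) : x ∈ C := by
  classical
  have hins := hC.2.2 (insert x C) (by simpa [Set.insert_subset_iff] using ⟨hx, hC.1⟩)
    (by rw [coe_insert]; exact hC.2.1.insert fun y hy _ => hxC y hy) (subset_insert _ _)
  exact hins ▸ mem_insert_self x C

section Graded

variable [GradeOrder ℕ α]

theorem exists_covBy (hC : IsMaximalChainIn M C)
    (hgap : ∀ a ∈ M, ∀ b ∈ M, a < b → ¬ a ⋖ b → ∃ m ∈ M, a < m ∧ m < b)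
    {a : α} (ha : a ∈ C) (hlt : ∃ c ∈ C, a < c) : ∃ b ∈ C, a ⋖ b := by
  classical
  obtain ⟨c, hc, hac⟩ := hlt
  obtain ⟨b, hb, hbmin⟩ := (C.filter (a < ·)).exists_min_image (grade ℕ) ⟨c, by simp [hc, hac]⟩
  rw [mem_filter] at hb
  refine ⟨b, hb.1, by_contra fun hcov => ?_⟩
  obtain ⟨m, hm, ham, hmb⟩ := hgap a (hC.1 ha) b (hC.1 hb.1) hb.2 hcov
  have hmC : m ∈ C := by
    refine hC.mem_of_forall_le_or_ge hm fun y hy => ?_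
    rcases le_or_gt (grade ℕ y) (grade ℕ a) with hya | hay
    · exact Or.inr ((hC.2.1.le_of_grade_le hy ha hya).trans ham.le)
    · have hay' : a < y := (hC.2.1.le_of_grade_le ha hy hay.le).lt_of_ne (by rintro rfl; omega)
      exact Or.inl (hmb.le.trans
        (hC.2.1.le_of_grade_le hb.1 hy (hbmin y (mem_filter.2 ⟨hy, hay'⟩))))
  exact (hbmin m (mem_filter.2 ⟨hmC, ham⟩)).not_gt (grade_strictMono hmb)

end Graded

theorem card_eq [BoundedOrder α] [GradeMinOrder ℕ α] {n : ℕ} (hrank : grade ℕ (⊤ : α) = n)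
    (hC : IsMaximalChainIn M C) (hbot : ⊥ ∈ M) (htop : ⊤ ∈ M)
    (hgap : ∀ a ∈ M, ∀ b ∈ M, a < b → ¬ a ⋖ b → ∃ m ∈ M, a < m ∧ m < b) :
    C.card = n + 1 := by
  classical
  have hbotC : ⊥ ∈ C := hC.mem_of_forall_le_or_ge hbot fun _ _ => Or.inl bot_le
  have htopC : ⊤ ∈ C := hC.mem_of_forall_le_or_ge htop fun _ _ => Or.inr le_top
  have hinj : Set.InjOn (grade ℕ) (C : Set α) := fun x hx y hy h =>
    (hC.2.1.le_of_grade_le hx hy h.le).antisymm (hC.2.1.le_of_grade_le hy hx h.ge)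
  have himage : C.image (grade ℕ) = range (n + 1) := by
    ext k
    simp only [mem_image, mem_range]
    refine ⟨fun ⟨x, _, hx⟩ => hx ▸ hrank ▸ Nat.lt_succ_of_le (grade_strictMono.monotone le_top),
      fun hk => ?_⟩
    induction k with
    | zero => exact ⟨⊥, hbotC, by simp⟩
    | succ k ih =>
      obtain ⟨x, hx, rfl⟩ := ih (by omega)
      have hxtop : x < ⊤ := lt_top_iff_ne_top.2 fun h => by rw [h, hrank] at hk; omega
      obtain ⟨y, hy, hxy⟩ := hC.exists_covBy hgap hx ⟨⊤, htopC, hxtop⟩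
      exact ⟨y, hy, (Nat.covBy_iff_add_one_eq.1 (hxy.grade ℕ)).symm⟩
  rw [← card_image_of_injOn hinj, himage, card_range]

end IsMaximalChainIn

end MaximalChain

theorem restrict_to_good_coatoms_general
    (n : ℕ) (hn : 1 ≤ n)
    (α : Type*) [Lattice α] [BoundedOrder α] [GradeMinOrder ℕ α]
    (hrank : grade ℕ (⊤ : α) = n)
    (K : Type*) [Field K]
    (hH : Nontrivial (ReducedHomology K (properPart α) (n - 1)))
    (M : Set α)
    (hM : M = {x | ∃ c, grade ℕ c = n - 1 ∧
        Nontrivial (ReducedHomology K (Set.Ioo (⊥ : α) c) (n - 2)) ∧ x ≤ c} ∪ {⊤}) :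
    (∀ x ∈ M, ∀ y ∈ M,
        (∃ z, IsGreatest {w ∈ M | w ≤ x ∧ w ≤ y} z) ∧
        (∃ z, IsLeast {w ∈ M | x ≤ w ∧ y ≤ w} z)) ∧
    (∀ C : Finset α, ↑C ⊆ M → IsChain (· ≤ ·) (C : Set α) →
        (∀ C' : Finset α, ↑C' ⊆ M → IsChain (· ≤ ·) (C' : Set α) → C ⊆ C' → C' = C) →
        C.card = n + 1) ∧
    (∀ c ∈ M, grade ℕ c = n - 1 →
        Nontrivial (ReducedHomology K (Set.Ioo (⊥ : α) c) (n - 2))) ∧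
    Nontrivial (ReducedHomology K (M \ {⊥, ⊤} : Set α) (n - 1)) := by
  subst hM
  set J := {x : α | ∃ c, grade ℕ c = n - 1 ∧
    Nontrivial (ReducedHomology K (Set.Ioo (⊥ : α) c) (n - 2)) ∧ x ≤ c}
  have hJ : IsLowerSet J := fun a b hba ⟨c, hc, hgood, hac⟩ => ⟨c, hc, hgood, hba.trans hac⟩
  have hcoatom : ∀ a ∈ J, ∃ c ∈ J, c ⋖ ⊤ ∧ a ≤ c := fun a ⟨c, hc, hgood, hac⟩ =>
    ⟨c, ⟨c, hc, hgood, le_rfl⟩, covBy_top_of_grade_eq hrank hn hc, hac⟩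
  obtain ⟨c₀, hc₀, hgood₀⟩ := exists_good_coatom hrank hn hH
  refine ⟨fun x hx y hy => ⟨exists_isGreatest_of_isLowerSet hJ hx hy,
    exists_isLeast_of_isLowerSet hJ x y⟩, fun C hCM hC hmax => ?_, ?_, ?_⟩
  · exact IsMaximalChainIn.card_eq hrank ⟨hCM, hC, hmax⟩ (Or.inl ⟨c₀, hc₀, hgood₀, bot_le⟩)
      (Or.inr rfl) fun a ha b hb => exists_mem_Ioo_of_not_covBy hJ hcoatom ha hb
  · rintro c (⟨c', hc', hgood, hcc'⟩ | rfl) hc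
    · rwa [eq_of_le_of_grade_eq hcc' (hc.trans hc'.symm)]
    · omega
  · obtain ⟨z, hz, hz0⟩ := exists_mem_simpCycles_ne_zero hH
    have hproper : (J ∪ {⊤}) \ {⊥, ⊤} ⊆ properPart α := fun x hx =>
      ⟨fun h => hx.2 (Or.inl h), fun h => hx.2 (Or.inr h)⟩
    have : IsEmpty (OrderedSimplex ((J ∪ {⊤}) \ {⊥, ⊤}) (n - 1 + 1)) :=
      isEmpty_orderedSimplex_of_subset_Ioo (properPart_eq_Ioo (α := α) ▸ hproper)
        (by rw [hrank, grade_bot, Nat.bot_eq_zero]; omega)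
    refine nontrivial_reducedHomology_of_support_subset hproper hz hz0 fun σ hσ i => ?_
    obtain ⟨c, hc, hgood, hle⟩ := exists_good_coatom_ge hrank hz hσ i
    exact ⟨Or.inl ⟨c, hc, hgood, hle⟩, by rintro (h | h); exacts [(σ.2.2 i).1 h, (σ.2.2 i).2 h]⟩

/-- Restricting to the ideal generated by the good coatoms: with `M = J ∪ {⊤}`, where
`J` is the order ideal of `L ∖ {⊤}` generated by the good coatoms, the subposet `M`
is a graded lattice of rank `n` (pairs have meets and joins in `M`, maximal chains of
`M` have `n + 1` elements), all coatoms of `M` are good, and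
`H̃_{n-2}(Δ(M∖{⊥,⊤}); K) ≠ 0`. -/
theorem restrict_to_good_coatoms
    (n : ℕ) (hn : 1 ≤ n)
    (α : Type*) [Lattice α] [BoundedOrder α] [Fintype α] [GradeMinOrder ℕ α]
    (hrank : grade ℕ (⊤ : α) = n)
    (K : Type*) [Field K]
    (hH : Nontrivial (ReducedHomology K (properPart α) (n - 1)))
    (M : Set α)
    (hM : M = {x | ∃ c, grade ℕ c = n - 1 ∧
        Nontrivial (ReducedHomology K (Set.Ioo (⊥ : α) c) (n - 2)) ∧ x ≤ c} ∪ {⊤}) :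
    (∀ x ∈ M, ∀ y ∈ M,
        (∃ z, IsGreatest {w ∈ M | w ≤ x ∧ w ≤ y} z) ∧
        (∃ z, IsLeast {w ∈ M | x ≤ w ∧ y ≤ w} z)) ∧
    (∀ C : Finset α, ↑C ⊆ M → IsChain (· ≤ ·) (C : Set α) →
        (∀ C' : Finset α, ↑C' ⊆ M → IsChain (· ≤ ·) (C' : Set α) → C ⊆ C' → C' = C) →
        C.card = n + 1) ∧
    (∀ c ∈ M, grade ℕ c = n - 1 →
        Nontrivial (ReducedHomology K (Set.Ioo (⊥ : α) c) (n - 2))) ∧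
    Nontrivial (ReducedHomology K (M \ {⊥, ⊤} : Set α) (n - 1)) :=
  restrict_to_good_coatoms_general n hn α hrank K hH M hM
end

section
/- Let L be a finite graded lattice of rank n whose proper part has nonzero (n-2)-nd reduced homology over k. Then for every i, the number of i-dimensional faces of the order complex Δ(L̄) is at least the number of i-dimensional faces of the barycentric subdivision of the (n-1)-dimensional simplex, i.e., f_i(Δ(L̄)) ≥ Σ_{S ⊆ [n-1], |S| = i+1} α_n(S), where α_n(S) is the multinomial coefficient associated to S. -/
set_option maxSynthPendingDepth 2

open Finset

variable {α : Type*}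

/-!
A nonzero class of `H̃_{n-2}(Δ(L̄); K)` is represented by a cycle `z` supported on maximal chains
of `L̄`, and every facet of a chain in the support is a facet of a second one: each element of
such a chain can be exchanged for another element of the same grade. In a lattice, such a closed
family of maximal chains of an interval of length `m` has at least `m.choose t` elements of
grade `t`. Indeed, some element `a` of grade `1` is not below some element `y` of grade `m - 1`
(otherwise everything would lie below `y`, since each element of grade `r + 1` is the join of
two elements of grade `r`, and `y` could not be exchanged), and the chains through `y` and those
through `a` are closed families of length `m - 1` whose elements of grade `t` are disjoint.
Choosing the element of grade `s₁` of a chain and recursing among the chains through it gives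
at least `α_n(S)` chains with rank set `S`.
-/

theorem sum_ncard_le_ncard_of_pairwiseDisjoint {ι β : Type*} {F : Finset ι} {A : ι → Set β}
    {T : Set β} (hT : T.Finite) (hsub : ∀ i ∈ F, A i ⊆ T)
    (hdisj : (F : Set ι).PairwiseDisjoint A) :
    ∑ i ∈ F, (A i).ncard ≤ T.ncard := by
  rw [← finsum_mem_coe_finset,
    ← Set.Finite.ncard_biUnion F.finite_toSet (fun i hi => hT.subset (hsub i hi)) hdisj]
  exact Set.ncard_le_ncard (Set.iUnion₂_subset hsub) hT

theorem ncard_mul_le_ncard_of_pairwiseDisjoint {ι β : Type*} {X : Set ι} {A : ι → Set β}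
    {T : Set β} {q : ℕ} (hX : X.Finite) (hT : T.Finite) (hsub : ∀ x ∈ X, A x ⊆ T)
    (hdisj : X.PairwiseDisjoint A) (hq : ∀ x ∈ X, q ≤ (A x).ncard) :
    X.ncard * q ≤ T.ncard :=
  calc X.ncard * q = ∑ _x ∈ hX.toFinset, q := by
        rw [sum_const, smul_eq_mul, Set.ncard_eq_toFinset_card X hX]
    _ ≤ ∑ x ∈ hX.toFinset, (A x).ncard := sum_le_sum fun x hx => hq x (hX.mem_toFinset.1 hx)
    _ ≤ T.ncard := sum_ncard_le_ncard_of_pairwiseDisjoint hT (by simpa using hsub)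
        (by simpa using hdisj)

theorem IsChain.injOn_grade {𝕆 : Type*} [Preorder 𝕆] [PartialOrder α] [GradeOrder 𝕆 α]
    {s : Set α} (hs : IsChain (· ≤ ·) s) : s.InjOn (grade 𝕆) := by
  intro x hx y hy hxy
  by_contra hne
  rcases hs hx hy hne with h | h
  · exact (grade_strictMono (h.lt_of_ne hne)).ne hxy
  · exact (grade_strictMono (h.lt_of_ne (Ne.symm hne))).ne hxy.symm

/-- The multinomial coefficient of the gaps `l₁ - lo, l₂ - l₁, …, hi - lₘ` of a sorted list
`lo ≤ l₁ ≤ ⋯ ≤ lₘ ≤ hi`, as a product of binomial coefficients. -/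
def gapMultinomial : ℕ → ℕ → List ℕ → ℕ
  | _, _, [] => 1
  | lo, hi, s :: l => (hi - lo).choose (s - lo) * gapMultinomial s hi l

theorem gapMultinomial_mul_prod_factorial {lo hi : ℕ} {l : List ℕ} (hl : l.Pairwise (· ≤ ·))
    (hmem : ∀ s ∈ l, lo ≤ s ∧ s ≤ hi) :
    gapMultinomial lo hi l * ((l ++ [hi]).zipWith (fun b a => (b - a).factorial) (lo :: l)).prod
      = (hi - lo).factorial := by
  induction l generalizing lo with
  | nil => simp [gapMultinomial]
  | cons s l ih =>
    obtain ⟨hls, hl⟩ := List.pairwise_cons.1 hl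
    have hs := hmem s List.mem_cons_self
    have ih := ih hl fun t ht => ⟨hls t ht, (hmem t (List.mem_cons_of_mem s ht)).2⟩
    simp only [List.cons_append, List.zipWith_cons_cons, List.prod_cons, gapMultinomial]
    calc (hi - lo).choose (s - lo) * gapMultinomial s hi l * ((s - lo).factorial *
          ((l ++ [hi]).zipWith (fun b a => (b - a).factorial) (s :: l)).prod)
        = (hi - lo).choose (s - lo) * (s - lo).factorial * (hi - lo - (s - lo)).factorial := by
          rw [show hi - lo - (s - lo) = hi - s by omega, ← ih]
          ring
      _ = (hi - lo).factorial := Nat.choose_mul_factorial_mul_factorial (by omega)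

theorem alphaMulti_eq_gapMultinomial {n : ℕ} {S : Finset ℕ} (hS : ∀ s ∈ S, s ≤ n) :
    alphaMulti n S = gapMultinomial 0 n (S.sort (· ≤ ·)) := by
  have h := gapMultinomial_mul_prod_factorial (lo := 0) (hi := n) (S.pairwise_sort (· ≤ ·))
    fun s hs => ⟨Nat.zero_le s, hS s ((mem_sort _).1 hs)⟩
  rw [Nat.sub_zero] at h
  rw [alphaMulti, ← h]
  exact Nat.mul_div_cancel _
    (Nat.pos_of_ne_zero fun h0 => Nat.factorial_ne_zero n (by rw [← h, h0, mul_zero]))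

/-- A flag is encoded as a function `f : ℕ → α` whose value at `r ∈ [lo, hi]` is its element of
grade `r`. The maximal chains in the support of a top-dimensional cycle of an order complex
form such a closed family. -/
structure IsClosedFlagFamily [PartialOrder α] [GradeOrder ℕ α] (𝒞 : Set (ℕ → α)) (lo hi : ℕ) :
    Prop where
  nonempty : 𝒞.Nonempty
  grade_apply : ∀ f ∈ 𝒞, ∀ r ∈ Set.Icc lo hi, grade ℕ (f r) = r
  monotoneOn : ∀ f ∈ 𝒞, MonotoneOn f (Set.Icc lo hi)
  exists_update_mem : ∀ f ∈ 𝒞, ∀ r ∈ Set.Ioo lo hi, ∃ x ≠ f r, Function.update f r x ∈ 𝒞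

namespace IsClosedFlagFamily

section PartialOrder

variable [PartialOrder α] [GradeOrder ℕ α] {𝒞 : Set (ℕ → α)} {lo hi r : ℕ} {f : ℕ → α}

theorem restrict (h : IsClosedFlagFamily 𝒞 lo hi) {lo' hi' : ℕ} {x : α} (hlo : lo ≤ lo')
    (hhi : hi' ≤ hi) (hr : r ∉ Set.Ioo lo' hi') (hx : x ∈ Function.eval r '' 𝒞) :
    IsClosedFlagFamily {f ∈ 𝒞 | f r = x} lo' hi' where
  nonempty := hx
  grade_apply f hf s hs := h.grade_apply f hf.1 s (Set.Icc_subset_Icc hlo hhi hs)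
  monotoneOn f hf := (h.monotoneOn f hf.1).mono (Set.Icc_subset_Icc hlo hhi)
  exists_update_mem f hf s hs := by
    obtain ⟨y, hy, hmem⟩ := h.exists_update_mem f hf.1 s (Set.Ioo_subset_Ioo hlo hhi hs)
    refine ⟨y, hy, hmem, ?_⟩
    rw [Function.update_of_ne (ne_of_mem_of_not_mem hs hr).symm, hf.2]

theorem covBy (h : IsClosedFlagFamily 𝒞 lo hi) (hf : f ∈ 𝒞) (hr : r ∈ Set.Ico lo hi) :
    f r ⋖ f (r + 1) := by
  obtain ⟨hlr, hrh⟩ := hr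
  have hgr := h.grade_apply f hf r ⟨hlr, hrh.le⟩
  have hgr' := h.grade_apply f hf (r + 1) ⟨by omega, hrh⟩
  have hle := h.monotoneOn f hf ⟨hlr, hrh.le⟩ ⟨by omega, hrh⟩ (Nat.le_succ r)
  refine (covBy_iff_lt_covBy_grade (𝕆 := ℕ)).2 ⟨hle.lt_of_ne fun he => ?_, ?_⟩
  · rw [he, hgr'] at hgr
    omega
  · rw [hgr, hgr', Nat.covBy_iff_add_one_eq]

theorem image_grade_image [DecidableEq α] (h : IsClosedFlagFamily 𝒞 lo hi) (hf : f ∈ 𝒞)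
    {S : Finset ℕ} (hS : ∀ s ∈ S, s ∈ Set.Icc lo hi) : (S.image f).image (grade ℕ) = S := by
  rw [image_image, image_congr (f := grade ℕ ∘ f) (g := id)
    fun s hs => h.grade_apply f hf s (hS s (mem_coe.1 hs)), image_id]

theorem apply_notMem_image [DecidableEq α] (h : IsClosedFlagFamily 𝒞 lo hi) (hf : f ∈ 𝒞)
    {g : ℕ → α} (hg : g ∈ 𝒞) (hr : r ∈ Set.Icc lo hi) {S : Finset ℕ}
    (hS : ∀ s ∈ S, s ∈ Set.Icc lo hi) (hrS : r ∉ S) : g r ∉ S.image f := fun hgr => hrS <| by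
  simpa [h.image_grade_image hf hS, h.grade_apply g hg r hr] using mem_image_of_mem (grade ℕ) hgr

theorem isChain_image [DecidableEq α] (h : IsClosedFlagFamily 𝒞 lo hi) (hf : f ∈ 𝒞)
    {S : Finset ℕ} (hS : ∀ s ∈ S, s ∈ Set.Icc lo hi) : IsChain (· ≤ ·) (↑(S.image f) : Set α) := by
  rw [coe_image]
  rintro _ ⟨s, hs, rfl⟩ _ ⟨t, ht, rfl⟩ -
  rcases le_total s t with hst | hst
  · exact Or.inl (h.monotoneOn f hf (hS s hs) (hS t ht) hst)
  · exact Or.inr (h.monotoneOn f hf (hS t ht) (hS s hs) hst)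

end PartialOrder

section SemilatticeSup

variable [SemilatticeSup α] [GradeOrder ℕ α] {𝒞 : Set (ℕ → α)} {lo hi r : ℕ} {f : ℕ → α}

theorem apply_le_of_forall_apply_le (h : IsClosedFlagFamily 𝒞 lo hi) {J : α}
    (hJ : ∀ f ∈ 𝒞, f (lo + 1) ≤ J) (hf : f ∈ 𝒞) (hr : r ∈ Set.Ioo lo hi) : f r ≤ J := by
  obtain ⟨hlr, hrh⟩ := hr
  induction r, hlr using Nat.le_induction generalizing f with
  | base => exact hJ f hf
  | succ r hlr ih =>
    obtain ⟨x, hx, hmem⟩ := h.exists_update_mem f hf r ⟨hlr, by omega⟩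
    have hcov := h.covBy hmem (r := r) ⟨by omega, by omega⟩
    rw [Function.update_self, Function.update_of_ne (by omega)] at hcov
    rw [← (h.covBy hf ⟨by omega, by omega⟩).wcovBy.sup_eq hcov.wcovBy hx.symm]
    exact sup_le (ih hf (by omega)) (by simpa using ih hmem (by omega))

theorem exists_not_le (h : IsClosedFlagFamily 𝒞 lo hi) (hlh : lo + 2 ≤ hi) :
    ∃ f ∈ 𝒞, ∃ g ∈ 𝒞, ¬ f (lo + 1) ≤ g (hi - 1) := by
  obtain ⟨g, hg⟩ := h.nonempty
  obtain ⟨y, hy, hmem⟩ := h.exists_update_mem g hg (hi - 1) ⟨by omega, by omega⟩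
  by_contra! H
  have hle : y ≤ g (hi - 1) := by
    simpa using h.apply_le_of_forall_apply_le (fun f hf => H f hf g hg) hmem
      (r := hi - 1) ⟨by omega, by omega⟩
  have hgr := h.grade_apply _ hmem (hi - 1) ⟨by omega, by omega⟩
  rw [Function.update_self, ← h.grade_apply g hg (hi - 1) ⟨by omega, by omega⟩] at hgr
  exact hy (hle.eq_of_not_lt fun hlt => (grade_strictMono hlt).ne hgr)

theorem choose_le_ncard_image_eval [Finite α] {𝒞 : Set (ℕ → α)} {lo hi r : ℕ}
    (h : IsClosedFlagFamily 𝒞 lo hi) (hr : r ∈ Set.Icc lo hi) :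
    (hi - lo).choose (r - lo) ≤ (Function.eval r '' 𝒞).ncard := by
  obtain ⟨hlr, hrh⟩ := hr
  by_cases hend : r = lo ∨ r = hi
  · have hone : (hi - lo).choose (r - lo) = 1 := by rcases hend with rfl | rfl <;> simp
    rw [hone, Nat.one_le_iff_ne_zero, Ne, Set.ncard_eq_zero]
    exact (h.nonempty.image _).ne_empty
  obtain ⟨f, hf, g, hg, hfg⟩ := h.exists_not_le (by omega)
  have hbelow := (h.restrict le_rfl (Nat.sub_le hi 1) (r := hi - 1) (by simp)
    ⟨g, hg, rfl⟩).choose_le_ncard_image_eval (r := r) ⟨hlr, by omega⟩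
  have habove := (h.restrict (Nat.le_succ lo) le_rfl (r := lo + 1) (by simp)
    ⟨f, hf, rfl⟩).choose_le_ncard_image_eval (r := r) ⟨by omega, hrh⟩
  have hdisj : Disjoint (Function.eval r '' {f' ∈ 𝒞 | f' (hi - 1) = g (hi - 1)})
      (Function.eval r '' {f' ∈ 𝒞 | f' (lo + 1) = f (lo + 1)}) := by
    rw [Set.disjoint_left]
    rintro _ ⟨f₁, ⟨hf₁, hf₁g⟩, rfl⟩ ⟨f₂, ⟨hf₂, hf₂f⟩, hf₂r⟩
    refine hfg ?_
    calc f (lo + 1) = f₂ (lo + 1) := hf₂f.symm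
      _ ≤ f₂ r := h.monotoneOn f₂ hf₂ ⟨by omega, by omega⟩ ⟨hlr, hrh⟩ (by omega)
      _ = f₁ r := hf₂r
      _ ≤ f₁ (hi - 1) := h.monotoneOn f₁ hf₁ ⟨hlr, hrh⟩ ⟨by omega, by omega⟩ (by omega)
      _ = g (hi - 1) := hf₁g
  have hpascal : (hi - lo).choose (r - lo) =
      (hi - 1 - lo).choose (r - lo) + (hi - (lo + 1)).choose (r - (lo + 1)) := by
    rw [show hi - lo = hi - 1 - lo + 1 by omega, show r - lo = r - (lo + 1) + 1 by omega,
      Nat.choose_succ_succ', show hi - (lo + 1) = hi - 1 - lo by omega, add_comm]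
  calc (hi - lo).choose (r - lo)
      ≤ (Function.eval r '' {f' ∈ 𝒞 | f' (hi - 1) = g (hi - 1)}).ncard +
        (Function.eval r '' {f' ∈ 𝒞 | f' (lo + 1) = f (lo + 1)}).ncard :=
        hpascal ▸ add_le_add hbelow habove
    _ = _ := (Set.ncard_union_eq hdisj).symm
    _ ≤ (Function.eval r '' 𝒞).ncard := Set.ncard_le_ncard
        (Set.union_subset (Set.image_mono (Set.sep_subset _ _))
          (Set.image_mono (Set.sep_subset _ _)))
termination_by hi - lo
decreasing_by all_goals omega

theorem gapMultinomial_le_ncard_image [DecidableEq α] [Finite α]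
    (h : IsClosedFlagFamily 𝒞 lo hi) {S : Finset ℕ} (hS : ∀ s ∈ S, s ∈ Set.Ioo lo hi) :
    gapMultinomial lo hi (S.sort (· ≤ ·)) ≤ ((fun f => S.image f) '' 𝒞).ncard := by
  induction S using Finset.induction_on_min generalizing lo 𝒞 with
  | empty =>
    rw [sort_empty, gapMultinomial, Nat.one_le_iff_ne_zero, Ne, Set.ncard_eq_zero]
    exact (h.nonempty.image _).ne_empty
  | insert a S haS ih =>
    have ha := hS a (mem_insert_self a S)
    have hS' : ∀ s ∈ S, s ∈ Set.Ioo a hi := fun s hs => ⟨haS s hs, (hS s (mem_insert_of_mem hs)).2⟩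
    have hSIcc : ∀ s ∈ S, s ∈ Set.Icc lo hi := fun s hs =>
      Set.Ioo_subset_Icc_self (hS s (mem_insert_of_mem hs))
    have haS' : a ∉ S := fun haS' => lt_irrefl a (haS a haS')
    rw [sort_insert _ (fun s hs => (haS s hs).le) haS', gapMultinomial]
    set X := Function.eval a '' 𝒞
    set T : α → Set (Finset α) := fun x => insert x '' ((fun f => S.image f) '' {f ∈ 𝒞 | f a = x})
    have hnotMem : ∀ x ∈ X, ∀ f ∈ 𝒞, x ∉ S.image f := by
      rintro _ ⟨g, hg, rfl⟩ f hf
      exact h.apply_notMem_image hf hg (Set.Ioo_subset_Icc_self ha) hSIcc haS'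
    have hT : ∀ x ∈ X, gapMultinomial a hi (S.sort (· ≤ ·)) ≤ (T x).ncard := by
      intro x hx
      have hinj : Set.InjOn (insert x) ((fun f => S.image f) '' {f ∈ 𝒞 | f a = x}) := by
        rintro _ ⟨f, hf, rfl⟩ _ ⟨g, hg, rfl⟩ hfg
        dsimp only at hfg ⊢
        rw [← erase_insert (hnotMem x hx f hf.1), ← erase_insert (hnotMem x hx g hg.1)]
        exact congrArg (·.erase x) hfg
      rw [hinj.ncard_image]
      exact ih (h.restrict ha.1.le le_rfl (by simp) hx) hS'
    have hsub : ∀ x ∈ X, T x ⊆ (fun f => (insert a S).image f) '' 𝒞 := by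
      rintro x - _ ⟨_, ⟨f, ⟨hf, rfl⟩, rfl⟩, rfl⟩
      exact ⟨f, hf, image_insert f a S⟩
    have hdisj : X.PairwiseDisjoint T := by
      intro x hx y hy hxy
      rw [Function.onFun, Set.disjoint_left]
      rintro _ ⟨_, ⟨f, ⟨hf, -⟩, rfl⟩, rfl⟩ ⟨_, ⟨g, ⟨hg, -⟩, rfl⟩, hfg⟩
      have hxg : x ∈ insert y (S.image g) := hfg ▸ mem_insert_self x _
      rcases mem_insert.1 hxg with rfl | hxg
      · exact hxy rfl
      · exact hnotMem x hx g hg hxg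
    calc (hi - lo).choose (a - lo) * gapMultinomial a hi (S.sort (· ≤ ·))
        ≤ X.ncard * gapMultinomial a hi (S.sort (· ≤ ·)) :=
          Nat.mul_le_mul_right _ (h.choose_le_ncard_image_eval (Set.Ioo_subset_Icc_self ha))
      _ ≤ _ := ncard_mul_le_ncard_of_pairwiseDisjoint (Set.toFinite X) (Set.toFinite _) hsub
          hdisj hT

end SemilatticeSup

end IsClosedFlagFamily

section OrderComplex

variable {K : Type*} [CommRing K]

theorem OrderedSimplex.apply_eq_of_face_eq [Preorder α] {s : Set α} {j : ℕ}
    {σ τ : OrderedSimplex s (j + 1)} {i : Fin (j + 1)} (h : τ.face i = σ.face i) {l : Fin (j + 1)}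
    (hl : l ≠ i) : τ.1 l = σ.1 l := by
  obtain ⟨l', rfl⟩ := Fin.exists_succAbove_eq hl
  exact congrFun (congrArg Subtype.val h) l'

theorem OrderedSimplex.eq_of_face_eq [Preorder α] {s : Set α} {j : ℕ}
    {σ τ : OrderedSimplex s (j + 1)} {i : Fin (j + 1)} (h : τ.face i = σ.face i)
    (hi : τ.1 i = σ.1 i) : τ = σ :=
  Subtype.ext <| funext fun l => if hl : l = i then hl ▸ hi else apply_eq_of_face_eq h hl

theorem simpBoundary_apply_s14 [Preorder α] {s : Set α} {j : ℕ} (z : SimpChains K s (j + 1))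
    (ρ : OrderedSimplex s j) :
    simpBoundary K s j z ρ =
      ∑ τ ∈ z.support, ∑ i, Finsupp.single (τ.face i) ((-1) ^ (i : ℕ) * z τ) ρ := by
  simp only [simpBoundary, Finsupp.lsum_apply, Finsupp.sum, Finsupp.finsetSum_apply,
    LinearMap.sum_apply, LinearMap.smul_apply, Finsupp.lsingle_apply, Finsupp.smul_single,
    smul_eq_mul]

/-- Otherwise `σ.face i` would occur in `∂z` with coefficient `± z σ ≠ 0`. -/
theorem exists_face_eq_of_simpBoundary_eq_zero [Preorder α] {s : Set α} {j : ℕ}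
    {z : SimpChains K s (j + 1)} (hz : simpBoundary K s j z = 0) {σ : OrderedSimplex s (j + 1)}
    (hσ : σ ∈ z.support) (i : Fin (j + 1)) :
    ∃ τ ∈ z.support, ∃ i', (τ, i') ≠ (σ, i) ∧ τ.face i' = σ.face i := by
  by_contra! H
  have hcoeff := DFunLike.congr_fun hz (σ.face i)
  rw [simpBoundary_apply_s14, ← sum_product', sum_eq_single_of_mem (σ, i)
    (mem_product.2 ⟨hσ, mem_univ i⟩) fun p hp hne =>
      Finsupp.single_eq_of_ne' (H p.1 (mem_product.1 hp).1 p.2 hne),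
    Finsupp.single_eq_same, Finsupp.zero_apply] at hcoeff
  exact Finsupp.mem_support_iff.1 hσ (((isUnit_neg_one.pow _).mul_right_eq_zero).1 hcoeff)

theorem exists_simpBoundary_eq_zero_ne_zero [Preorder α] {s : Set α} {j : ℕ}
    (h : Nontrivial (ReducedHomology K s (j + 1))) :
    ∃ z : SimpChains K s (j + 1), simpBoundary K s j z = 0 ∧ z ≠ 0 := by
  by_contra! H
  have : Subsingleton (simpCycles K s (j + 1)) :=
    ⟨fun a b => Subtype.ext <| (H a a.2).trans (H b b.2).symm⟩
  exact not_subsingleton (ReducedHomology K s (j + 1)) (Submodule.mkQ_surjective _).subsingleton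

variable [PartialOrder α] [BoundedOrder α] [GradeMinOrder ℕ α]

theorem OrderedSimplex.grade_apply {k : ℕ} (hrank : grade ℕ (⊤ : α) = k + 1)
    (σ : OrderedSimplex (properPart α) k) (i : Fin k) : grade ℕ (σ.1 i) = i + 1 := by
  have hbounds : ∀ i, 1 ≤ grade ℕ (σ.1 i) ∧ grade ℕ (σ.1 i) ≤ k := fun i => by
    have hbot := grade_strictMono (𝕆 := ℕ) (σ.2.2 i).1.bot_lt
    have htop := grade_strictMono (𝕆 := ℕ) (σ.2.2 i).2.lt_top
    rw [grade_bot, Nat.bot_eq_zero] at hbot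
    omega
  let g : Fin k → Fin k := fun i => ⟨grade ℕ (σ.1 i) - 1, by have := hbounds i; omega⟩
  have hg : StrictMono g := fun a b hab => by
    have := grade_strictMono (𝕆 := ℕ) (σ.2.1 hab)
    have := hbounds a
    simp only [g, Fin.mk_lt_mk]
    omega
  have := congrArg Fin.val (congrFun hg.eq_id i)
  simp only [g, id] at this
  have := hbounds i
  omega

/-- The vertices of a simplex of maximal dimension are determined by their grades, so the second
simplex sharing the facet opposite to `σ j` differs from `σ` exactly at `j`. -/
theorem exists_face_eq_apply_ne {k : ℕ} (hrank : grade ℕ (⊤ : α) = k + 2)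
    {z : SimpChains K (properPart α) (k + 1)} (hz : simpBoundary K _ k z = 0)
    {σ : OrderedSimplex (properPart α) (k + 1)} (hσ : σ ∈ z.support) (j : Fin (k + 1)) :
    ∃ τ ∈ z.support, τ.face j = σ.face j ∧ τ.1 j ≠ σ.1 j := by
  obtain ⟨τ, hτ, i, hne, hface⟩ := exists_face_eq_of_simpBoundary_eq_zero hz hσ j
  have hij : i = j := Fin.succAbove_left_injective <| funext fun l => Fin.ext <| by
    have := congrArg (grade ℕ) (congrFun (congrArg Subtype.val hface) l)
    simpa [OrderedSimplex.face, OrderedSimplex.grade_apply hrank] using this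
  subst hij
  exact ⟨τ, hτ, hface, fun h => hne (by rw [OrderedSimplex.eq_of_face_eq hface h])⟩

theorem IsClosedFlagFamily.of_simpBoundary_eq_zero {k : ℕ} (hrank : grade ℕ (⊤ : α) = k + 2)
    {z : SimpChains K (properPart α) (k + 1)} (hz : simpBoundary K _ k z = 0) (hz0 : z ≠ 0) :
    IsClosedFlagFamily {f : ℕ → α | f 0 = ⊥ ∧ f (k + 2) = ⊤ ∧
      ∃ σ ∈ z.support, ∀ i : Fin (k + 1), f (i + 1) = σ.1 i} 0 (k + 2) := by
  have exists_succ {r : ℕ} (hr : r ∈ Set.Ioo 0 (k + 2)) : ∃ i : Fin (k + 1), (i : ℕ) + 1 = r :=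
    ⟨⟨r - 1, by obtain ⟨h₁, h₂⟩ := hr; omega⟩, Nat.sub_add_cancel hr.1⟩
  refine ⟨?_, ?_, ?_, ?_⟩
  · obtain ⟨σ, hσ⟩ := Finsupp.support_nonempty_iff.2 hz0
    refine ⟨fun r => if r = 0 then ⊥ else if h : r - 1 < k + 1 then σ.1 ⟨r - 1, h⟩ else ⊤,
      by simp, by simp, σ, hσ, fun i => by simp [i.is_le]⟩
  · rintro f ⟨h0, htop, σ, -, hfσ⟩ r ⟨-, hr⟩
    obtain rfl | hr0 := Nat.eq_zero_or_pos r
    · rw [h0, grade_bot, Nat.bot_eq_zero]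
    obtain rfl | hrk := hr.eq_or_lt
    · rw [htop, hrank]
    obtain ⟨i, rfl⟩ := exists_succ ⟨hr0, hrk⟩
    rw [hfσ, OrderedSimplex.grade_apply hrank]
  · rintro f ⟨h0, htop, σ, -, hfσ⟩ r ⟨-, hr⟩ r' ⟨-, hr'⟩ hrr'
    obtain rfl | hr0 := Nat.eq_zero_or_pos r
    · exact h0 ▸ bot_le
    obtain rfl | hr'k := hr'.eq_or_lt
    · exact htop ▸ le_top
    obtain ⟨i, rfl⟩ := exists_succ ⟨hr0, by omega⟩
    obtain ⟨i', rfl⟩ := exists_succ ⟨by omega, hr'k⟩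
    rw [hfσ, hfσ]
    exact σ.2.1.monotone (Fin.le_iff_val_le_val.2 (by omega))
  · rintro f ⟨h0, htop, σ, hσ, hfσ⟩ r hr
    obtain ⟨j, rfl⟩ := exists_succ hr
    obtain ⟨τ, hτ, hface, hne⟩ := exists_face_eq_apply_ne hrank hz hσ j
    refine ⟨τ.1 j, by rwa [hfσ], ?_⟩
    refine ⟨by rw [Function.update_of_ne (by omega), h0],
      by rw [Function.update_of_ne (by omega), htop],
      τ, hτ, fun i => ?_⟩
    by_cases hij : i = j
    · rw [hij, Function.update_self]
    · rw [Function.update_of_ne (by simpa [Fin.val_eq_val] using hij), hfσ,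
        OrderedSimplex.apply_eq_of_face_eq hface hij]

end OrderComplex

theorem alphaMulti_le_flagf [Lattice α] [BoundedOrder α] [GradeMinOrder ℕ α] [Finite α]
    {K : Type*} [CommRing K] {n : ℕ} (hn : 2 ≤ n) (hrank : grade ℕ (⊤ : α) = n)
    (hH : Nontrivial (ReducedHomology K (properPart α) (n - 1))) {S : Finset ℕ}
    (hS : S ⊆ Finset.Icc 1 (n - 1)) : alphaMulti n S ≤ flagf α S := by
  classical
  obtain ⟨k, rfl⟩ : ∃ k, n = k + 2 := ⟨n - 2, by omega⟩
  obtain ⟨z, hz, hz0⟩ := exists_simpBoundary_eq_zero_ne_zero hH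
  have h𝒞 := IsClosedFlagFamily.of_simpBoundary_eq_zero hrank hz hz0
  have hSIoo : ∀ s ∈ S, s ∈ Set.Ioo 0 (k + 2) := fun s hs => by
    have := mem_Icc.1 (hS hs)
    exact ⟨by omega, by omega⟩
  have hSIcc : ∀ s ∈ S, s ∈ Set.Icc 0 (k + 2) := fun s hs => Set.Ioo_subset_Icc_self (hSIoo s hs)
  rw [alphaMulti_eq_gapMultinomial fun s hs => (hSIcc s hs).2]
  refine (h𝒞.gapMultinomial_le_ncard_image hSIoo).trans ?_
  refine (Set.ncard_le_ncard ?_ (Set.toFinite _)).trans_eq (Nat.card_coe_set_eq _).symm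
  rintro _ ⟨f, hf, rfl⟩
  refine ⟨h𝒞.isChain_image hf hSIcc, ?_, h𝒞.image_grade_image hf hSIcc⟩
  rw [coe_image]
  rintro _ ⟨s, hs, rfl⟩
  have hgr := h𝒞.grade_apply f hf s (hSIcc s hs)
  refine ⟨fun h => ?_, fun h => ?_⟩ <;> rw [h] at hgr
  · rw [grade_bot, Nat.bot_eq_zero] at hgr
    exact (hSIoo s hs).1.ne hgr
  · rw [hrank] at hgr
    exact (hSIoo s hs).2.ne hgr.symm

theorem sum_flagf_le_card_chains [PartialOrder α] [BoundedOrder α] [GradeMinOrder ℕ α] [Finite α]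
    {i : ℕ} (𝒮 : Finset (Finset ℕ)) (h𝒮 : ∀ S ∈ 𝒮, S.card = i + 1) :
    ∑ S ∈ 𝒮, flagf α S ≤ Nat.card {C : Finset α // C.card = i + 1 ∧
      IsChain (· ≤ ·) (C : Set α) ∧ ↑C ⊆ properPart α} := by
  refine (sum_ncard_le_ncard_of_pairwiseDisjoint (Set.toFinite _) ?_ ?_).trans_eq
    (Nat.card_coe_set_eq _).symm
  · rintro S hS C ⟨hC, hCp, hCS⟩
    refine ⟨?_, hC, hCp⟩
    rw [← h𝒮 S hS, ← hCS, card_image_of_injOn hC.injOn_grade]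
  · intro S _ S' _ hSS'
    exact Set.disjoint_left.2 fun C hC hC' => hSS' (hC.2.2.symm.trans hC'.2.2)

theorem f_vector_lower_bound_general
    (n : ℕ)
    (α : Type*) [Lattice α] [BoundedOrder α] [Fintype α] [GradeMinOrder ℕ α]
    (hrank : grade ℕ (⊤ : α) = n)
    (K : Type*) [Field K]
    (hH : Nontrivial (ReducedHomology K (properPart α) (n - 1)))
    (i : ℕ) :
    ∑ S ∈ (Finset.Icc 1 (n - 1)).powerset.filter (fun S => S.card = i + 1), alphaMulti n S
      ≤ Nat.card {C : Finset α // C.card = i + 1 ∧ IsChain (· ≤ ·) (C : Set α) ∧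
          ↑C ⊆ properPart α} := by
  rcases lt_or_ge n 2 with hn | hn
  · rw [Finset.Icc_eq_empty (by omega), powerset_empty, filter_singleton]
    simp
  calc ∑ S ∈ (Finset.Icc 1 (n - 1)).powerset.filter (fun S => S.card = i + 1), alphaMulti n S
      ≤ ∑ S ∈ (Finset.Icc 1 (n - 1)).powerset.filter (fun S => S.card = i + 1), flagf α S :=
        sum_le_sum fun S hS => alphaMulti_le_flagf hn hrank hH (mem_powerset.1 (mem_filter.1 hS).1)
    _ ≤ _ := sum_flagf_le_card_chains _ fun S hS => (mem_filter.1 hS).2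

/-- **Corollary 1.2.**  The barycentric subdivision of the `(n-1)`-simplex minimizes
the `f`-vector: if `L` is a finite graded lattice of rank `n` whose proper part has
nonzero reduced homology `H̃_{n-2}` over `K`, then for every `i` the number of
`i`-dimensional faces of `Δ(L̄)` (that is, of `(i+1)`-element chains in `L̄`) is at
least `∑_{S ⊆ [n-1], |S| = i+1} α_n(S)`. -/
theorem f_vector_lower_bound
    (n : ℕ) (hn : 1 ≤ n)
    (α : Type*) [Lattice α] [BoundedOrder α] [Fintype α] [GradeMinOrder ℕ α]
    (hrank : grade ℕ (⊤ : α) = n)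
    (K : Type*) [Field K]
    (hH : Nontrivial (ReducedHomology K (properPart α) (n - 1)))
    (i : ℕ) :
    ∑ S ∈ (Finset.Icc 1 (n - 1)).powerset.filter (fun S => S.card = i + 1), alphaMulti n S
      ≤ Nat.card {C : Finset α // C.card = i + 1 ∧ IsChain (· ≤ ·) (C : Set α) ∧
          ↑C ⊆ properPart α} :=
  f_vector_lower_bound_general n α hrank K hH i
end
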